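/- arXiv:2011.11580 — 2 statements merged into one kernel-verified Lean document; each statement's English description precedes it below -/
import Mathlib

section
/- Let n ≥ 1, let 𝒰₁,…,𝒰ₙ be unitary ensembles on ℂ² each of which is a unitary 3-design, let 𝒰 = 𝒰₁⊗⋯⊗𝒰ₙ be the product ensemble on ℂ^{2ⁿ}, and let ℰ₁ : M₂ → M₂ be a trace-preserving linear map. Let p ∈ {0,1,2,3}ⁿ, let P_p be the corresponding Pauli operator, and let w = wt(p). Then for every A ∈ M_{2ⁿ}: E_{U∼𝒰} Σ_{b∈{0,1}ⁿ} ⟨b| ℰ₁^{⊗n}(U A U†) |b⟩ · ⟨b| U P_p U† |b⟩² = 3^{−w} · tr(A). -/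
open scoped ComplexOrder Kronecker
open Matrix MeasureTheory

noncomputable section

namespace NoisyShadows

/-- The shadow channel `M_{𝒰,ℰ}` of the unitary ensemble `U` (a nonempty finite family,
averaged uniformly) and the map `E`:
`M(A) = E_{U∼𝒰} Σ_b ⟨b|E(U A U†)|b⟩ · U†|b⟩⟨b|U`. -/
def shadowChannel {κ ι : Type*} [Fintype κ] [Fintype ι] [DecidableEq ι]
    (U : κ → Matrix ι ι ℂ) (E : Matrix ι ι ℂ → Matrix ι ι ℂ)
    (A : Matrix ι ι ℂ) : Matrix ι ι ℂ :=
  (Fintype.card κ : ℂ)⁻¹ • ∑ k : κ, ∑ b : ι,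
    (E (U k * A * (U k)ᴴ)) b b • ((U k)ᴴ * Matrix.single b b 1 * U k)

/-- A positive map sends positive semidefinite matrices to positive semidefinite matrices. -/
def IsPositiveMap {ι : Type*} [Fintype ι] (Φ : Matrix ι ι ℂ → Matrix ι ι ℂ) : Prop :=
  ∀ A : Matrix ι ι ℂ, A.PosSemidef → (Φ A).PosSemidef

/-- The blockwise map `id_{M_k} ⊗ Φ`. -/
def tensorIdMap (k : ℕ) {ι : Type*} (Φ : Matrix ι ι ℂ → Matrix ι ι ℂ) :
    Matrix (Fin k × ι) (Fin k × ι) ℂ → Matrix (Fin k × ι) (Fin k × ι) ℂ :=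
  fun M => Matrix.of fun p q => Φ (Matrix.of fun a b => M (p.1, a) (q.1, b)) p.2 q.2

/-- Complete positivity. -/
def IsCompletelyPositive {ι : Type*} [Fintype ι] (Φ : Matrix ι ι ℂ → Matrix ι ι ℂ) : Prop :=
  ∀ k : ℕ, 1 ≤ k → IsPositiveMap (tensorIdMap k Φ)

/-- Trace preservation. -/
def IsTracePreserving {ι : Type*} [Fintype ι] (Φ : Matrix ι ι ℂ → Matrix ι ι ℂ) : Prop :=
  ∀ A : Matrix ι ι ℂ, (Φ A).trace = A.trace

/-- A quantum channel is a completely positive trace-preserving linear map. -/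
def IsQuantumChannel {ι : Type*} [Fintype ι] (Φ : Matrix ι ι ℂ → Matrix ι ι ℂ) : Prop :=
  IsCompletelyPositive Φ ∧ IsTracePreserving Φ

/-- A density matrix: positive semidefinite with trace one. -/
def IsDensityMatrix {ι : Type*} [Fintype ι] (σ : Matrix ι ι ℂ) : Prop :=
  σ.PosSemidef ∧ σ.trace = 1

/-- All members of the family are unitary matrices. -/
def IsUnitaryEnsemble {κ ι : Type*} [Fintype ι] [DecidableEq ι]
    (U : κ → Matrix ι ι ℂ) : Prop :=
  ∀ k, U k ∈ Matrix.unitaryGroup ι ℂ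

/-- `Ψ` is the adjoint of `Φ` with respect to the Hilbert–Schmidt inner product
`⟨A,B⟩ = tr(A† B)`. -/
def IsHSAdjoint {ι : Type*} [Fintype ι] (Φ Ψ : Matrix ι ι ℂ → Matrix ι ι ℂ) : Prop :=
  ∀ A B : Matrix ι ι ℂ, (Aᴴ * Φ B).trace = ((Ψ A)ᴴ * B).trace

/-- Square of the shadow seminorm `‖O‖²_{shadow,𝒰,ℰ}`, expressed with a given adjoint
`MinvAdj` of the inverse shadow channel: the supremum over density matrices `σ` of
`E_{U∼𝒰} Σ_b ⟨b|E(UσU†)|b⟩ ⟨b|U M^{-1,†}(O) U†|b⟩²`. -/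
def shadowNormSq {κ ι : Type*} [Fintype κ] [Fintype ι] [DecidableEq ι]
    (U : κ → Matrix ι ι ℂ) (E MinvAdj : Matrix ι ι ℂ → Matrix ι ι ℂ)
    (O : Matrix ι ι ℂ) : ℝ :=
  sSup {x : ℝ | ∃ σ : Matrix ι ι ℂ, IsDensityMatrix σ ∧
    x = ((Fintype.card κ : ℂ)⁻¹ * ∑ k : κ, ∑ b : ι,
      (E (U k * σ * (U k)ᴴ)) b b * ((U k * MinvAdj O * (U k)ᴴ) b b) ^ 2).re}

/-- The shadow seminorm `‖O‖_{shadow,𝒰,ℰ}`. -/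
def shadowNorm {κ ι : Type*} [Fintype κ] [Fintype ι] [DecidableEq ι]
    (U : κ → Matrix ι ι ℂ) (E MinvAdj : Matrix ι ι ℂ → Matrix ι ι ℂ)
    (O : Matrix ι ι ℂ) : ℝ :=
  Real.sqrt (shadowNormSq U E MinvAdj O)

/-- `Tr(ℰ∘diag) = Σ_b ⟨b|ℰ(|b⟩⟨b|)|b⟩`. -/
def diagTrace {ι : Type*} [Fintype ι] [DecidableEq ι]
    (E : Matrix ι ι ℂ → Matrix ι ι ℂ) : ℂ :=
  ∑ b : ι, (E (Matrix.single b b 1)) b b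

/-- The depolarizing map `D_{d,f}(A) = f·A + (1−f)·tr(A)·I/d` (where `d` is the size of the
index type). -/
def depol (ι : Type*) [Fintype ι] [DecidableEq ι] (f : ℂ)
    (A : Matrix ι ι ℂ) : Matrix ι ι ℂ :=
  f • A + ((1 - f) * (A.trace / (Fintype.card ι : ℂ))) • (1 : Matrix ι ι ℂ)

/-- `t`-fold Kronecker power of a matrix. -/
def kpow {ι : Type*} (t : ℕ) (U : Matrix ι ι ℂ) :
    Matrix (Fin t → ι) (Fin t → ι) ℂ :=
  Matrix.of fun x y => ∏ j, U (x j) (y j)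

instance {ι : Type*} [Fintype ι] [DecidableEq ι] :
    MeasurableSpace (Matrix.unitaryGroup ι ℂ) := borel _

/-- `𝒰` is a unitary `t`-design: the `t`-fold ensemble twirl coincides with the `t`-fold twirl
over the Haar probability measure on the unitary group. -/
def IsUnitaryDesign {κ ι : Type*} [Fintype κ] [Fintype ι] [DecidableEq ι]
    (U : κ → Matrix ι ι ℂ) (t : ℕ) : Prop :=
  ∃ μ : Measure (Matrix.unitaryGroup ι ℂ), μ.IsHaarMeasure ∧ IsProbabilityMeasure μ ∧
    ∀ A : Matrix (Fin t → ι) (Fin t → ι) ℂ, ∀ x y : Fin t → ι,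
      (Fintype.card κ : ℂ)⁻¹ * ∑ k : κ, (kpow t (U k) * A * (kpow t (U k))ᴴ) x y
        = ∫ V : Matrix.unitaryGroup ι ℂ,
            (kpow t (V : Matrix ι ι ℂ) * A * (kpow t (V : Matrix ι ι ℂ))ᴴ) x y ∂μ

/-- Kronecker product of an `n`-indexed family of `2×2` matrices. -/
def kprod {n : ℕ} (A : Fin n → Matrix (Fin 2) (Fin 2) ℂ) :
    Matrix (Fin n → Fin 2) (Fin n → Fin 2) ℂ :=
  Matrix.of fun x y => ∏ i, A i (x i) (y i)

/-- Spectral (operator) norm of a matrix. -/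
def spNorm {ι : Type*} [Fintype ι] [DecidableEq ι] (A : Matrix ι ι ℂ) : ℝ :=
  ‖Matrix.toEuclideanCLM (𝕜 := ℂ) A‖


/-- The Pauli matrices `σ₀ = I, σ₁ = X, σ₂ = Y, σ₃ = Z`. -/
def pauli : Fin 4 → Matrix (Fin 2) (Fin 2) ℂ :=
  ![1, !![0, 1; 1, 0], !![0, -Complex.I; Complex.I, 0], !![1, 0; 0, -1]]

/-! Both sides are linear in `A`, so it suffices to take `A = A₁ ⊗ ⋯ ⊗ Aₙ`; for such inputs
the average factorises over the qubits. On one qubit with `q ≠ 0`, `M = U σ_q U†` is traceless,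
so `⟨1|M|1⟩ = -⟨0|M|0⟩` and the summand is `⟨0|M|0⟩² tr ℰ₁(U A U†) = ⟨0|M|0⟩² tr A`. The design
property replaces the average of `⟨0|M|0⟩²` by its Haar integral, which is `1/3`: writing
`M = xX + yY + zZ`, left invariance under rotations taking `Z` to `X` and to `Y` turns three
copies of the integral into the integral of `x² + y² + z² = 1`. -/

open Finset

section PiKronecker

variable {τ ι R : Type*} [Fintype τ] [CommSemiring R]

def piKron (M : τ → Matrix ι ι R) : Matrix (τ → ι) (τ → ι) R :=
  Matrix.of fun x y => ∏ j, M j (x j) (y j)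

@[simp]
lemma piKron_apply (M : τ → Matrix ι ι R) (x y : τ → ι) :
    piKron M x y = ∏ j, M j (x j) (y j) := rfl

lemma kpow_eq_piKron (t : ℕ) (U : Matrix ι ι ℂ) : kpow t U = piKron fun _ => U := rfl

lemma piKron_conjTranspose [StarRing R] (M : τ → Matrix ι ι R) :
    (piKron M)ᴴ = piKron fun j => (M j)ᴴ := by
  ext x y
  simp [star_prod]

lemma piKron_single [DecidableEq ι] (x y : τ → ι) :
    piKron (fun j => Matrix.single (x j) (y j) (1 : R)) = Matrix.single x y 1 := by
  ext u v
  simp only [piKron_apply, Matrix.single_apply, Fintype.prod_boole, funext_iff, forall_and]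

lemma linearMap_ext_piKron [Finite ι] [DecidableEq ι] {M : Type*} [AddCommMonoid M]
    [Module R M] {f g : Matrix (τ → ι) (τ → ι) R →ₗ[R] M}
    (h : ∀ A : τ → Matrix ι ι R, f (piKron A) = g (piKron A)) : f = g := by
  refine Matrix.ext_linearMap (R := R) ?_
  intro x y
  refine LinearMap.ext_ring ?_
  simpa [piKron_single] using h fun j => Matrix.single (x j) (y j) 1

variable [DecidableEq τ]

lemma piKron_mul [Fintype ι] (M N : τ → Matrix ι ι R) :
    piKron M * piKron N = piKron (M * N) := by
  ext x y
  simp only [Matrix.mul_apply, piKron_apply, Pi.mul_apply, ← prod_mul_distrib]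
  exact (Fintype.prod_sum fun j c => M j (x j) c * N j c (y j)).symm

lemma trace_piKron [Fintype ι] (M : τ → Matrix ι ι R) :
    (piKron M).trace = ∏ j, (M j).trace := by
  simp only [Matrix.trace, Matrix.diag_apply, piKron_apply]
  exact (Fintype.prod_sum fun j c => M j c c).symm

end PiKronecker

section Unitary

variable {ι : Type*} [Fintype ι] [DecidableEq ι] {V : Matrix ι ι ℂ}

lemma trace_conj_unitary (hV : V ∈ Matrix.unitaryGroup ι ℂ) (A : Matrix ι ι ℂ) :
    (V * A * Vᴴ).trace = A.trace := by
  rw [Matrix.trace_mul_cycle, ← Matrix.star_eq_conjTranspose, Unitary.star_mul_self_of_mem hV,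
    Matrix.one_mul]

lemma conj_mul_conj_unitary (hV : V ∈ Matrix.unitaryGroup ι ℂ) (A B : Matrix ι ι ℂ) :
    V * A * Vᴴ * (V * B * Vᴴ) = V * (A * B) * Vᴴ := by
  have h : Vᴴ * V = 1 := Unitary.star_mul_self_of_mem hV
  simp only [Matrix.mul_assoc, ← Matrix.mul_assoc Vᴴ V, h, Matrix.one_mul]

lemma conj_one_unitary (hV : V ∈ Matrix.unitaryGroup ι ℂ) : V * 1 * Vᴴ = 1 := by
  rw [Matrix.mul_one]
  exact Unitary.mul_star_self_of_mem hV

end Unitary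

lemma conj_mul {ι : Type*} [Fintype ι] (W V A : Matrix ι ι ℂ) :
    W * V * A * (W * V)ᴴ = W * (V * A * Vᴴ) * Wᴴ := by
  simp only [Matrix.conjTranspose_mul, Matrix.mul_assoc]

lemma pauli_trace_eq_zero {q : Fin 4} (hq : q ≠ 0) : (pauli q).trace = 0 := by
  fin_cases q
  · exact absurd rfl hq
  all_goals simp [pauli, Matrix.trace_fin_two]

lemma pauli_mul_self (q : Fin 4) : pauli q * pauli q = 1 := by
  fin_cases q <;> ext i j <;> fin_cases i <;> fin_cases j <;>
    simp [pauli, Matrix.mul_apply, Fin.sum_univ_two, Matrix.one_apply]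

/- Up to a phase, `unitaryZXᴴ * Z * unitaryZX = X` and `unitaryZYᴴ * Z * unitaryZY = Y`, so the
`(0,0)` entries of the conjugates of a traceless `M` are its `X`- and `Y`-coefficients. -/
def unitaryZX : Matrix (Fin 2) (Fin 2) ℂ :=
  !![(1 + Complex.I) / 2, (1 + Complex.I) / 2; (1 + Complex.I) / 2, -((1 + Complex.I) / 2)]

def unitaryZY : Matrix (Fin 2) (Fin 2) ℂ :=
  !![(1 + Complex.I) / 2, (1 - Complex.I) / 2; (1 - Complex.I) / 2, (1 + Complex.I) / 2]

lemma sq_conj_unitaryZX_add_sq_conj_unitaryZY (M : Matrix (Fin 2) (Fin 2) ℂ)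
    (h0 : M.trace = 0) (h1 : M * M = 1) :
    M 0 0 ^ 2 + (unitaryZX * M * unitaryZXᴴ) 0 0 ^ 2 + (unitaryZY * M * unitaryZYᴴ) 0 0 ^ 2
      = 1 := by
  have h11 : M 1 1 = -M 0 0 := by
    rw [Matrix.trace_fin_two] at h0
    linear_combination h0
  have hdet : M 0 0 * M 0 0 + M 0 1 * M 1 0 = 1 := by
    simpa [Matrix.mul_apply, Fin.sum_univ_two] using congrFun (congrFun h1 0) 0
  simp only [unitaryZX, unitaryZY, Matrix.mul_apply, Fin.sum_univ_two, Matrix.conjTranspose_apply,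
    Matrix.of_apply, Matrix.cons_val', Matrix.cons_val_zero, Matrix.cons_val_one,
    Matrix.empty_val', Matrix.cons_val_fin_one, Complex.star_def, map_div₀, map_add, map_sub,
    map_one, map_ofNat, Complex.conj_I, h11]
  ring_nf
  simp only [Complex.I_sq, Complex.I_pow_three, Complex.I_pow_four]
  linear_combination hdet

lemma unitaryZX_mem : unitaryZX ∈ Matrix.unitaryGroup (Fin 2) ℂ := by
  rw [Matrix.mem_unitaryGroup_iff, Matrix.star_eq_conjTranspose]
  ext i j
  fin_cases i <;> fin_cases j <;>
    simp [unitaryZX, Matrix.mul_apply, Fin.sum_univ_two, Complex.ext_iff, Complex.conj_ofNat] <;>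
    norm_num

lemma unitaryZY_mem : unitaryZY ∈ Matrix.unitaryGroup (Fin 2) ℂ := by
  rw [Matrix.mem_unitaryGroup_iff, Matrix.star_eq_conjTranspose]
  ext i j
  fin_cases i <;> fin_cases j <;>
    simp [unitaryZY, Matrix.mul_apply, Fin.sum_univ_two, Complex.ext_iff, Complex.conj_ofNat] <;>
    norm_num

section Haar

variable {ι : Type*} [Fintype ι] [DecidableEq ι]

instance : BorelSpace (Matrix.unitaryGroup ι ℂ) := ⟨rfl⟩

instance : CompactSpace (Matrix.unitaryGroup ι ℂ) := by
  have hball : IsCompact (Set.univ.pi (fun _ : ι => Set.univ.pi fun _ : ι =>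
      Metric.closedBall (0 : ℂ) 1) : Set (Matrix ι ι ℂ)) :=
    isCompact_univ_pi fun _ => isCompact_univ_pi fun _ => isCompact_closedBall 0 1
  refine isCompact_iff_compactSpace.mp
    (hball.of_isClosed_subset (isClosed_unitary (R := Matrix ι ι ℂ)) ?_)
  intro U hU i _ j _
  simpa using entry_norm_bound_of_unitary hU i j

lemma continuous_conj_apply (A : Matrix ι ι ℂ) (i j : ι) :
    Continuous fun V : Matrix.unitaryGroup ι ℂ =>
      ((V : Matrix ι ι ℂ) * A * (V : Matrix ι ι ℂ)ᴴ) i j := by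
  have hV : Continuous fun V : Matrix.unitaryGroup ι ℂ => (V : Matrix ι ι ℂ) :=
    continuous_subtype_val
  exact (continuous_apply j).comp <| (continuous_apply i).comp <|
    (hV.matrix_mul continuous_const).matrix_mul hV.matrix_conjTranspose

end Haar

lemma integral_sq_conj_apply_zero_zero (μ : Measure (Matrix.unitaryGroup (Fin 2) ℂ))
    [μ.IsHaarMeasure] [IsProbabilityMeasure μ] {P : Matrix (Fin 2) (Fin 2) ℂ}
    (hP0 : P.trace = 0) (hP1 : P * P = 1) :
    ∫ V : Matrix.unitaryGroup (Fin 2) ℂ,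
      ((V : Matrix (Fin 2) (Fin 2) ℂ) * P * (V : Matrix (Fin 2) (Fin 2) ℂ)ᴴ) 0 0 ^ 2 ∂μ
        = 1 / 3 := by
  set g : Matrix.unitaryGroup (Fin 2) ℂ → ℂ := fun V =>
    ((V : Matrix (Fin 2) (Fin 2) ℂ) * P * (V : Matrix (Fin 2) (Fin 2) ℂ)ᴴ) 0 0 ^ 2
  have hg : Continuous g := (continuous_conj_apply P 0 0).pow 2
  have hint : ∀ W, Integrable (fun V => g (W * V)) μ := fun W =>
    (hg.comp (continuous_const_mul W)).integrable_of_hasCompactSupport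
      (HasCompactSupport.of_compactSpace _)
  let X : Matrix.unitaryGroup (Fin 2) ℂ := ⟨unitaryZX, unitaryZX_mem⟩
  let Y : Matrix.unitaryGroup (Fin 2) ℂ := ⟨unitaryZY, unitaryZY_mem⟩
  have hsum : ∀ V, g (1 * V) + g (X * V) + g (Y * V) = 1 := fun V => by
    have hV := V.2
    simp only [g, Submonoid.coe_mul, conj_mul, OneMemClass.coe_one, Matrix.one_mul]
    exact sq_conj_unitaryZX_add_sq_conj_unitaryZY _ (by rw [trace_conj_unitary hV, hP0])
      (by rw [conj_mul_conj_unitary hV, hP1, conj_one_unitary hV])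
  have h3 : 3 * ∫ V, g V ∂μ = 1 := by
    calc 3 * ∫ V, g V ∂μ
        = ∫ V, g (1 * V) ∂μ + ∫ V, g (X * V) ∂μ + ∫ V, g (Y * V) ∂μ := by
          simp only [integral_mul_left_eq_self]; ring
      _ = ∫ V, (g (1 * V) + g (X * V) + g (Y * V)) ∂μ := by
          rw [integral_add ?_ (hint Y), integral_add (hint 1) (hint X)]
          exact (hint 1).add (hint X)
      _ = 1 := by simp only [hsum, integral_const, probReal_univ, one_smul]
  linear_combination h3 / 3

/- A `3`-design also reproduces second moments: pad `Q ⊗ Q` with an identity factor. -/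
lemma kpow_three_conj_apply {ι : Type*} [Fintype ι] [DecidableEq ι] {V : Matrix ι ι ℂ}
    (hV : V ∈ Matrix.unitaryGroup ι ℂ) (Q : Matrix ι ι ℂ) (i : ι) :
    (kpow 3 V * piKron ![Q, Q, 1] * (kpow 3 V)ᴴ) (fun _ => i) (fun _ => i)
      = (V * Q * Vᴴ) i i ^ 2 := by
  rw [kpow_eq_piKron, piKron_conjTranspose, piKron_mul, piKron_mul, piKron_apply,
    Fin.prod_univ_three]
  have hVV : V * Vᴴ = 1 := Unitary.mul_star_self_of_mem hV
  simp [hVV, sq]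

lemma IsUnitaryDesign.exists_average_sq_conj_apply {κ ι : Type*} [Fintype κ] [Fintype ι]
    [DecidableEq ι] {U : κ → Matrix ι ι ℂ} (hU : IsUnitaryEnsemble U)
    (hdes : IsUnitaryDesign U 3) (Q : Matrix ι ι ℂ) (i : ι) :
    ∃ μ : Measure (Matrix.unitaryGroup ι ℂ), μ.IsHaarMeasure ∧ IsProbabilityMeasure μ ∧
      (Fintype.card κ : ℂ)⁻¹ * ∑ k, (U k * Q * (U k)ᴴ) i i ^ 2
        = ∫ V : Matrix.unitaryGroup ι ℂ,
            ((V : Matrix ι ι ℂ) * Q * (V : Matrix ι ι ℂ)ᴴ) i i ^ 2 ∂μ := by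
  obtain ⟨μ, hHaar, hProb, htwirl⟩ := hdes
  refine ⟨μ, hHaar, hProb, ?_⟩
  simpa only [kpow_three_conj_apply (hU _), kpow_three_conj_apply (Subtype.property _)]
    using htwirl (piKron ![Q, Q, 1]) (fun _ => i) (fun _ => i)

lemma average_sq_conj_pauli {κ : Type*} [Fintype κ] {U : κ → Matrix (Fin 2) (Fin 2) ℂ}
    (hU : IsUnitaryEnsemble U) (hdes : IsUnitaryDesign U 3) {q : Fin 4} (hq : q ≠ 0) :
    (Fintype.card κ : ℂ)⁻¹ * ∑ k, (U k * pauli q * (U k)ᴴ) 0 0 ^ 2 = 1 / 3 := by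
  obtain ⟨μ, hHaar, hProb, hμ⟩ := hdes.exists_average_sq_conj_apply hU (pauli q) 0
  rw [hμ]
  exact integral_sq_conj_apply_zero_zero μ (pauli_trace_eq_zero hq) (pauli_mul_self q)

def shadowMoment {κ ι : Type*} [Fintype κ] [Fintype ι] (U : κ → Matrix ι ι ℂ)
    (E : Matrix ι ι ℂ →ₗ[ℂ] Matrix ι ι ℂ) (O : Matrix ι ι ℂ) : Matrix ι ι ℂ →ₗ[ℂ] ℂ where
  toFun A := (Fintype.card κ : ℂ)⁻¹ * ∑ k, ∑ b,
    E (U k * A * (U k)ᴴ) b b * (U k * O * (U k)ᴴ) b b ^ 2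
  map_add' A B := by
    simp only [mul_add, add_mul, map_add, Matrix.add_apply, sum_add_distrib]
  map_smul' c A := by
    simp only [Matrix.mul_smul, Matrix.smul_mul, map_smul, Matrix.smul_apply, smul_eq_mul,
      RingHom.id_apply, mul_assoc, ← mul_sum]
    ring

lemma shadowMoment_apply {κ ι : Type*} [Fintype κ] [Fintype ι] (U : κ → Matrix ι ι ℂ)
    (E : Matrix ι ι ℂ →ₗ[ℂ] Matrix ι ι ℂ) (O A : Matrix ι ι ℂ) :
    shadowMoment U E O A = (Fintype.card κ : ℂ)⁻¹ * ∑ k, ∑ b,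
      E (U k * A * (U k)ᴴ) b b * (U k * O * (U k)ᴴ) b b ^ 2 := rfl

lemma shadowMoment_piKron {τ ι : Type*} [Fintype τ] [DecidableEq τ] [Fintype ι]
    {κ : τ → Type*} [∀ j, Fintype (κ j)] (U : ∀ j, κ j → Matrix ι ι ℂ)
    (E : τ → Matrix ι ι ℂ →ₗ[ℂ] Matrix ι ι ℂ)
    (En : Matrix (τ → ι) (τ → ι) ℂ →ₗ[ℂ] Matrix (τ → ι) (τ → ι) ℂ)
    (hEn : ∀ A : τ → Matrix ι ι ℂ, En (piKron A) = piKron fun j => E j (A j))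
    (O B : τ → Matrix ι ι ℂ) :
    shadowMoment (fun v : ∀ j, κ j => piKron fun j => U j (v j)) En (piKron O) (piKron B)
      = ∏ j, shadowMoment (U j) (E j) (O j) (B j) := by
  have hconj : ∀ (v : ∀ j, κ j) (C : τ → Matrix ι ι ℂ),
      (piKron fun j => U j (v j)) * piKron C * (piKron fun j => U j (v j))ᴴ
        = piKron fun j => U j (v j) * C j * (U j (v j))ᴴ := fun v C => by
    rw [piKron_conjTranspose, piKron_mul, piKron_mul]; rfl
  simp only [shadowMoment_apply, hconj, hEn, piKron_apply, ← prod_pow, ← prod_mul_distrib,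
    Fintype.card_pi, Nat.cast_prod]
  rw [prod_mul_distrib, prod_inv_distrib]
  simp only [Fintype.prod_sum]

lemma sum_diag_mul_sq_of_trace_eq_zero {R : Type*} [CommRing R]
    (N M : Matrix (Fin 2) (Fin 2) R) (hM : M.trace = 0) :
    ∑ c, N c c * M c c ^ 2 = M 0 0 ^ 2 * N.trace := by
  rw [Matrix.trace_fin_two] at hM ⊢
  rw [Fin.sum_univ_two, eq_neg_of_add_eq_zero_right hM]
  ring

lemma shadowMoment_pauli {κ : Type*} [Fintype κ] [Nonempty κ]
    {U : κ → Matrix (Fin 2) (Fin 2) ℂ} (hU : IsUnitaryEnsemble U) (hdes : IsUnitaryDesign U 3)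
    {E : Matrix (Fin 2) (Fin 2) ℂ →ₗ[ℂ] Matrix (Fin 2) (Fin 2) ℂ} (htp : IsTracePreserving ⇑E)
    (q : Fin 4) (B : Matrix (Fin 2) (Fin 2) ℂ) :
    shadowMoment U E (pauli q) B = (if q = 0 then 1 else 3⁻¹) * B.trace := by
  have htr : ∀ k, (E (U k * B * (U k)ᴴ)).trace = B.trace := fun k => by
    rw [htp, trace_conj_unitary (hU k)]
  rw [shadowMoment_apply]
  by_cases hq : q = 0
  · subst hq
    have hinner : ∀ k, ∑ b, E (U k * B * (U k)ᴴ) b b * (U k * pauli 0 * (U k)ᴴ) b b ^ 2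
        = B.trace := fun k => by
      rw [show pauli 0 = 1 from rfl, conj_one_unitary (hU k), ← htr k]
      simp [Matrix.trace]
    have hcard : (Fintype.card κ : ℂ) ≠ 0 := Nat.cast_ne_zero.2 Fintype.card_ne_zero
    simp only [hinner, sum_const, card_univ, nsmul_eq_mul, if_true]
    field_simp
  · have hinner : ∀ k, ∑ b, E (U k * B * (U k)ᴴ) b b * (U k * pauli q * (U k)ᴴ) b b ^ 2
        = (U k * pauli q * (U k)ᴴ) 0 0 ^ 2 * B.trace := fun k => by
      rw [sum_diag_mul_sq_of_trace_eq_zero _ _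
        (by rw [trace_conj_unitary (hU k), pauli_trace_eq_zero hq]), htr]
    simp only [hinner, ← sum_mul, ← mul_assoc, average_sq_conj_pauli hU hdes hq, if_neg hq]
    ring

theorem stmt_15_general {n : ℕ} {κ : Fin n → Type*}
    [∀ i, Fintype (κ i)] [∀ i, Nonempty (κ i)]
    (U : ∀ i, κ i → Matrix (Fin 2) (Fin 2) ℂ)
    (hU : ∀ i, IsUnitaryEnsemble (U i)) (hdes : ∀ i, IsUnitaryDesign (U i) 3)
    (E₁ : Matrix (Fin 2) (Fin 2) ℂ →ₗ[ℂ] Matrix (Fin 2) (Fin 2) ℂ)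
    (htp : IsTracePreserving (⇑E₁))
    (En : Matrix (Fin n → Fin 2) (Fin n → Fin 2) ℂ →ₗ[ℂ]
      Matrix (Fin n → Fin 2) (Fin n → Fin 2) ℂ)
    (hEn : ∀ A : Fin n → Matrix (Fin 2) (Fin 2) ℂ,
      En (kprod A) = kprod fun i => E₁ (A i))
    (p : Fin n → Fin 4) (A : Matrix (Fin n → Fin 2) (Fin n → Fin 2) ℂ) :
    (Fintype.card (∀ i, κ i) : ℂ)⁻¹ * ∑ v : ∀ i, κ i, ∑ b : Fin n → Fin 2,
        (En ((kprod fun i => U i (v i)) * A * (kprod fun i => U i (v i))ᴴ)) b b *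
          (((kprod fun i => U i (v i)) * kprod (fun i => pauli (p i)) *
            (kprod fun i => U i (v i))ᴴ) b b) ^ 2
      = ((3 : ℂ) ^ (Finset.univ.filter fun i => p i ≠ 0).card)⁻¹ * A.trace := by
  have hfun : shadowMoment (fun v : ∀ i, κ i => piKron fun i => U i (v i)) En
      (piKron fun i => pauli (p i))
        = ((3 : ℂ) ^ (Finset.univ.filter fun i => p i ≠ 0).card)⁻¹ •
            Matrix.traceLinearMap _ ℂ ℂ := by
    refine linearMap_ext_piKron fun B => ?_
    rw [shadowMoment_piKron U (fun _ => E₁) En hEn]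
    simp only [shadowMoment_pauli (hU _) (hdes _) htp, prod_mul_distrib, prod_ite,
      prod_const_one, prod_const, LinearMap.smul_apply, Matrix.traceLinearMap_apply,
      trace_piKron, smul_eq_mul, one_mul, inv_pow, ne_eq]
  exact LinearMap.congr_fun hfun A

/-- third-moment Pauli identity for a product of single-qubit 3-designs with
i.i.d. trace-preserving noise. -/
theorem stmt_15 {n : ℕ} (hn : 1 ≤ n) {κ : Fin n → Type*}
    [∀ i, Fintype (κ i)] [∀ i, Nonempty (κ i)]
    (U : ∀ i, κ i → Matrix (Fin 2) (Fin 2) ℂ)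
    (hU : ∀ i, IsUnitaryEnsemble (U i)) (hdes : ∀ i, IsUnitaryDesign (U i) 3)
    (E₁ : Matrix (Fin 2) (Fin 2) ℂ →ₗ[ℂ] Matrix (Fin 2) (Fin 2) ℂ)
    (htp : IsTracePreserving (⇑E₁))
    (En : Matrix (Fin n → Fin 2) (Fin n → Fin 2) ℂ →ₗ[ℂ]
      Matrix (Fin n → Fin 2) (Fin n → Fin 2) ℂ)
    (hEn : ∀ A : Fin n → Matrix (Fin 2) (Fin 2) ℂ,
      En (kprod A) = kprod fun i => E₁ (A i))
    (p : Fin n → Fin 4) (A : Matrix (Fin n → Fin 2) (Fin n → Fin 2) ℂ) :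
    (Fintype.card (∀ i, κ i) : ℂ)⁻¹ * ∑ v : ∀ i, κ i, ∑ b : Fin n → Fin 2,
        (En ((kprod fun i => U i (v i)) * A * (kprod fun i => U i (v i))ᴴ)) b b *
          (((kprod fun i => U i (v i)) * kprod (fun i => pauli (p i)) *
            (kprod fun i => U i (v i))ᴴ) b b) ^ 2
      = ((3 : ℂ) ^ (Finset.univ.filter fun i => p i ≠ 0).card)⁻¹ * A.trace :=
  stmt_15_general U hU hdes E₁ htp En hEn p A

end NoisyShadows
end
end

section
/- Let d ≥ 1, let 𝒰 be a unitary ensemble on ℂ^d, and let ℰ : M_d → M_d be a quantum channel such that M_{𝒰,ℰ} is invertible. Assume additionally that for every basis index b ∈ {1,…,d} there exists a density matrix σ on ℂ^d with ⟨b|ℰ(σ)|b⟩ ≠ 0. Then the shadow seminorm is point-separating on Hermitian matrices: if T is Hermitian and ‖T‖_{shadow,𝒰,ℰ} = 0, then T = 0. -/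
open scoped ComplexOrder Kronecker
open Matrix MeasureTheory

noncomputable section

namespace NoisyShadows

/-!
Positivity of `ℰ` makes `ℰ`, hence the shadow channel `M` and its inverse, commute with `ᴴ`; so
`O = M^{-1,†}(T)` is Hermitian and every summand `⟨b|ℰ(UσU†)|b⟩ ⟨b|UOU†|b⟩²` of the variance is a
nonnegative real. If the seminorm vanishes, the variance vanishes at every density matrix; taking
`σ = U_k† σ_b U_k`, with `σ_b` the faithfulness witness for `b`, gives `⟨b|U_k O U_k†|b⟩ = 0` for
all `k, b`. Then `tr(T C) = tr(O M(C)) = 0` for every `C`, because `tr(O M(C))` only sees these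
diagonal entries, and so `T = 0`.
-/

section PositiveMaps

variable {ι : Type*} [Fintype ι]

theorem IsCompletelyPositive.isPositiveMap {Φ : Matrix ι ι ℂ → Matrix ι ι ℂ}
    (h : IsCompletelyPositive Φ) : IsPositiveMap Φ := by
  intro A hA
  have hblock : tensorIdMap 1 Φ (A.submatrix Prod.snd Prod.snd)
      = (Φ A).submatrix (Prod.snd : Fin 1 × ι → ι) Prod.snd := rfl
  have hpos := h 1 le_rfl _ (hA.submatrix Prod.snd)
  rw [hblock] at hpos
  simpa using hpos.submatrix (fun i : ι => ((0 : Fin 1), i))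

open scoped MatrixOrder in
theorem IsPositiveMap.map_conjTranspose [DecidableEq ι] {Φ : Matrix ι ι ℂ →ₗ[ℂ] Matrix ι ι ℂ}
    (h : IsPositiveMap Φ) (A : Matrix ι ι ℂ) : Φ Aᴴ = (Φ A)ᴴ :=
  map_star (PositiveLinearMap.mk₀ Φ fun B hB => (h B (nonneg_iff_posSemidef.mp hB)).nonneg) A

end PositiveMaps

section DensityMatrices

variable {ι : Type*} [Fintype ι]

theorem IsDensityMatrix.unitary_conj [DecidableEq ι] {σ : Matrix ι ι ℂ} (hσ : IsDensityMatrix σ)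
    {V : Matrix ι ι ℂ} (hV : V ∈ unitaryGroup ι ℂ) : IsDensityMatrix (V * σ * Vᴴ) := by
  refine ⟨hσ.1.mul_mul_conjTranspose_same V, ?_⟩
  rw [trace_mul_cycle, ← star_eq_conjTranspose, Unitary.star_mul_self_of_mem hV, one_mul, hσ.2]

theorem IsDensityMatrix.apply_self_le_one {σ : Matrix ι ι ℂ} (hσ : IsDensityMatrix σ) (b : ι) :
    σ b b ≤ 1 := by
  rw [← hσ.2]
  exact Finset.single_le_sum (f := fun i => σ i i) (fun i _ => hσ.1.diag_nonneg)
    (Finset.mem_univ b)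

theorem IsQuantumChannel.isDensityMatrix_apply {Φ : Matrix ι ι ℂ → Matrix ι ι ℂ}
    (hΦ : IsQuantumChannel Φ) {σ : Matrix ι ι ℂ} (hσ : IsDensityMatrix σ) :
    IsDensityMatrix (Φ σ) :=
  ⟨hΦ.1.isPositiveMap σ hσ.1, (hΦ.2 σ).trans hσ.2⟩

theorem sq_conj_apply_self_nonneg {O : Matrix ι ι ℂ} (hO : O.IsHermitian) (V : Matrix ι ι ℂ)
    (b : ι) : 0 ≤ ((V * O * Vᴴ) b b) ^ 2 :=
  Complex.sq_nonneg_iff.mpr <| Complex.conj_eq_iff_im.mp <|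
    (isHermitian_mul_mul_conjTranspose V hO).apply b b

end DensityMatrices

theorem IsHSAdjoint.isHermitian_apply {ι : Type*} [Fintype ι] {Φ Ψ : Matrix ι ι ℂ → Matrix ι ι ℂ}
    (hAdj : IsHSAdjoint Φ Ψ) (hΦ : ∀ A, Φ Aᴴ = (Φ A)ᴴ) {T : Matrix ι ι ℂ} (hT : T.IsHermitian) :
    (Ψ T).IsHermitian := by
  refine ext_iff_trace_mul_right.mpr fun B => ?_
  calc ((Ψ T)ᴴ * B).trace = (T * Φ B).trace := by rw [← hAdj, hT.eq]
    _ = star ((Tᴴ * Φ Bᴴ).trace) := by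
      rw [hΦ, ← trace_conjTranspose, conjTranspose_mul, conjTranspose_conjTranspose,
        conjTranspose_conjTranspose, trace_mul_comm]
    _ = (Ψ T * B).trace := by
      rw [hAdj, ← trace_conjTranspose, conjTranspose_mul, conjTranspose_conjTranspose,
        conjTranspose_conjTranspose, trace_mul_comm]

section ShadowChannel

variable {κ ι : Type*} [Fintype κ] [Fintype ι] [DecidableEq ι]

theorem shadowChannel_conjTranspose (U : κ → Matrix ι ι ℂ) {E : Matrix ι ι ℂ → Matrix ι ι ℂ}
    (hE : ∀ A, E Aᴴ = (E A)ᴴ) (A : Matrix ι ι ℂ) :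
    shadowChannel U E Aᴴ = (shadowChannel U E A)ᴴ := by
  have hconj : ∀ V X : Matrix ι ι ℂ, (V * X * Vᴴ)ᴴ = V * Xᴴ * Vᴴ := fun V X => by
    simp only [conjTranspose_mul, conjTranspose_conjTranspose, Matrix.mul_assoc]
  have hproj : ∀ (V : Matrix ι ι ℂ) (b : ι), (Vᴴ * single b b 1 * V)ᴴ = Vᴴ * single b b 1 * V :=
    fun V b => by simpa using hconj Vᴴ (single b b 1)
  simp only [shadowChannel, conjTranspose_smul, conjTranspose_sum, ← hconj, hE,
    conjTranspose_apply, hproj, star_inv₀, star_natCast]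

theorem trace_mul_shadowChannel (U : κ → Matrix ι ι ℂ) (E : Matrix ι ι ℂ → Matrix ι ι ℂ)
    (X C : Matrix ι ι ℂ) :
    (X * shadowChannel U E C).trace = (Fintype.card κ : ℂ)⁻¹ *
      ∑ k, ∑ b, (E (U k * C * (U k)ᴴ)) b b * (U k * X * (U k)ᴴ) b b := by
  have hdiag : ∀ (V : Matrix ι ι ℂ) (b : ι),
      (X * (Vᴴ * single b b 1 * V)).trace = (V * X * Vᴴ) b b := fun V b => by
    rw [← Matrix.mul_assoc, ← Matrix.mul_assoc, trace_mul_cycle, ← Matrix.mul_assoc,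
      trace_mul_single]
    simp
  simp only [shadowChannel, Matrix.mul_smul, trace_smul, Matrix.mul_sum, trace_sum, hdiag,
    smul_eq_mul]

end ShadowChannel

section ShadowVariance

variable {κ ι : Type*} [Fintype κ] [Fintype ι] [DecidableEq ι]
  {U : κ → Matrix ι ι ℂ} {E : Matrix ι ι ℂ → Matrix ι ι ℂ} {O σ : Matrix ι ι ℂ}

/-- The expression under the supremum in `shadowNormSq U E MinvAdj O`, with `MinvAdj O`
replaced by `O`. -/
def shadowVariance (U : κ → Matrix ι ι ℂ) (E : Matrix ι ι ℂ → Matrix ι ι ℂ)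
    (O σ : Matrix ι ι ℂ) : ℂ :=
  (Fintype.card κ : ℂ)⁻¹ * ∑ k, ∑ b, (E (U k * σ * (U k)ᴴ)) b b * ((U k * O * (U k)ᴴ) b b) ^ 2

theorem shadowVariance_summand_nonneg (hE : IsQuantumChannel E) (hO : O.IsHermitian)
    (hσ : IsDensityMatrix σ) {V : Matrix ι ι ℂ} (hV : V ∈ unitaryGroup ι ℂ) (b : ι) :
    0 ≤ (E (V * σ * Vᴴ)) b b * ((V * O * Vᴴ) b b) ^ 2 :=
  mul_nonneg (hE.isDensityMatrix_apply (hσ.unitary_conj hV)).1.diag_nonneg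
    (sq_conj_apply_self_nonneg hO V b)

theorem shadowVariance_nonneg (hU : IsUnitaryEnsemble U) (hE : IsQuantumChannel E)
    (hO : O.IsHermitian) (hσ : IsDensityMatrix σ) : 0 ≤ shadowVariance U E O σ :=
  mul_nonneg (by positivity) <| Finset.sum_nonneg fun k _ => Finset.sum_nonneg fun b _ =>
    shadowVariance_summand_nonneg hE hO hσ (hU k) b

theorem shadowVariance_le (hU : IsUnitaryEnsemble U) (hE : IsQuantumChannel E)
    (hO : O.IsHermitian) (hσ : IsDensityMatrix σ) :
    shadowVariance U E O σ ≤ (Fintype.card κ : ℂ)⁻¹ * ∑ k, ∑ b, ((U k * O * (U k)ᴴ) b b) ^ 2 := by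
  refine mul_le_mul_of_nonneg_left ?_ (by positivity)
  gcongr with k _ b _
  exact mul_le_of_le_one_left (sq_conj_apply_self_nonneg hO _ b)
    ((hE.isDensityMatrix_apply (hσ.unitary_conj (hU k))).apply_self_le_one b)

theorem shadowVariance_summand_eq_zero (hU : IsUnitaryEnsemble U) (hE : IsQuantumChannel E)
    (hO : O.IsHermitian) (hσ : IsDensityMatrix σ) (h0 : shadowVariance U E O σ = 0)
    (k : κ) (b : ι) : (E (U k * σ * (U k)ᴴ)) b b * ((U k * O * (U k)ᴴ) b b) ^ 2 = 0 := by
  have hcard : (Fintype.card κ : ℂ)⁻¹ ≠ 0 := by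
    have : Nonempty κ := ⟨k⟩
    simp
  have hsum := (mul_eq_zero.mp h0).resolve_left hcard
  rw [Finset.sum_eq_zero_iff_of_nonneg fun k _ => Finset.sum_nonneg fun b _ =>
    shadowVariance_summand_nonneg hE hO hσ (hU k) b] at hsum
  exact (Finset.sum_eq_zero_iff_of_nonneg fun b _ =>
    shadowVariance_summand_nonneg hE hO hσ (hU k) b).mp (hsum k (Finset.mem_univ k)) b
    (Finset.mem_univ b)

theorem conj_apply_self_eq_zero_of_shadowVariance_eq_zero (hU : IsUnitaryEnsemble U)
    (hE : IsQuantumChannel E) (hO : O.IsHermitian)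
    (hfaithful : ∀ b, ∃ σ, IsDensityMatrix σ ∧ E σ b b ≠ 0)
    (h0 : ∀ σ, IsDensityMatrix σ → shadowVariance U E O σ = 0) (k : κ) (b : ι) :
    (U k * O * (U k)ᴴ) b b = 0 := by
  obtain ⟨σ, hσ, hσb⟩ := hfaithful b
  have hpullback : IsDensityMatrix ((U k)ᴴ * σ * (U k)ᴴᴴ) :=
    hσ.unitary_conj (Unitary.star_mem (hU k))
  have hconj : U k * ((U k)ᴴ * σ * (U k)ᴴᴴ) * (U k)ᴴ = σ := by
    rw [conjTranspose_conjTranspose, ← Matrix.mul_assoc, ← Matrix.mul_assoc,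
      ← star_eq_conjTranspose, Unitary.mul_star_self_of_mem (hU k), Matrix.one_mul,
      Matrix.mul_assoc, Unitary.mul_star_self_of_mem (hU k), Matrix.mul_one]
  have hterm := shadowVariance_summand_eq_zero hU hE hO hpullback (h0 _ hpullback) k b
  rw [hconj] at hterm
  exact pow_eq_zero_iff two_ne_zero |>.mp ((mul_eq_zero.mp hterm).resolve_left hσb)

theorem shadowVariance_eq_zero_of_shadowNorm_eq_zero {MinvAdj : Matrix ι ι ℂ → Matrix ι ι ℂ}
    (hU : IsUnitaryEnsemble U) (hE : IsQuantumChannel E) {T : Matrix ι ι ℂ}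
    (hO : (MinvAdj T).IsHermitian) (hT : shadowNorm U E MinvAdj T = 0)
    (hσ : IsDensityMatrix σ) : shadowVariance U E (MinvAdj T) σ = 0 := by
  have hbdd : BddAbove {x : ℝ | ∃ σ : Matrix ι ι ℂ, IsDensityMatrix σ ∧
      x = (shadowVariance U E (MinvAdj T) σ).re} := by
    refine ⟨((Fintype.card κ : ℂ)⁻¹ * ∑ k, ∑ b, ((U k * MinvAdj T * (U k)ᴴ) b b) ^ 2).re, ?_⟩
    rintro _ ⟨σ, hσ, rfl⟩
    exact Complex.re_le_re (shadowVariance_le hU hE hO hσ)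
  have hnonneg := shadowVariance_nonneg hU hE hO hσ
  have hre : (shadowVariance U E (MinvAdj T) σ).re ≤ 0 :=
    (le_csSup hbdd ⟨σ, hσ, rfl⟩).trans (Real.sqrt_eq_zero'.mp hT)
  exact le_antisymm (Complex.nonpos_iff.mpr ⟨hre, (Complex.nonneg_iff.mp hnonneg).2.symm⟩)
    hnonneg

end ShadowVariance

theorem stmt_18_general {d : ℕ} {κ : Type*} [Fintype κ]
    (U : κ → Matrix (Fin d) (Fin d) ℂ) (hU : IsUnitaryEnsemble U)
    (E : Matrix (Fin d) (Fin d) ℂ →ₗ[ℂ] Matrix (Fin d) (Fin d) ℂ)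
    (hE : IsQuantumChannel (⇑E))
    (Minv MinvAdj : Matrix (Fin d) (Fin d) ℂ → Matrix (Fin d) (Fin d) ℂ)
    (hMinvL : Function.LeftInverse Minv (shadowChannel U (⇑E)))
    (hMinvR : Function.RightInverse Minv (shadowChannel U (⇑E)))
    (hAdj : IsHSAdjoint Minv MinvAdj)
    (hfaithful : ∀ b : Fin d, ∃ σ : Matrix (Fin d) (Fin d) ℂ,
      IsDensityMatrix σ ∧ (E σ) b b ≠ 0) :
    ∀ T : Matrix (Fin d) (Fin d) ℂ, T.IsHermitian →
      shadowNorm U (⇑E) MinvAdj T = 0 → T = 0 := by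
  intro T hT hnorm
  have hMinv : ∀ A, Minv Aᴴ = (Minv A)ᴴ :=
    Function.Semiconj.inverse_left
      (shadowChannel_conjTranspose U hE.1.isPositiveMap.map_conjTranspose) hMinvL hMinvR
  have hO : (MinvAdj T).IsHermitian := hAdj.isHermitian_apply hMinv hT
  have hdiag : ∀ k b, (U k * MinvAdj T * (U k)ᴴ) b b = 0 :=
    conj_apply_self_eq_zero_of_shadowVariance_eq_zero hU hE hO hfaithful fun _ hσ =>
      shadowVariance_eq_zero_of_shadowNorm_eq_zero hU hE hO hnorm hσ
  rw [← hT.eq]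
  refine ext_iff_trace_mul_right.mpr fun C => ?_
  rw [Matrix.zero_mul, trace_zero]
  calc (Tᴴ * C).trace = (Tᴴ * Minv (shadowChannel U E C)).trace := by rw [hMinvL C]
    _ = ((MinvAdj T)ᴴ * shadowChannel U E C).trace := hAdj T _
    _ = 0 := by simp [trace_mul_shadowChannel, hO.eq, hdiag]

/-- under the stated faithfulness condition on the noise, the shadow seminorm is
point-separating on Hermitian matrices. -/
theorem stmt_18 {d : ℕ} (hd : 1 ≤ d) {κ : Type*} [Fintype κ] [Nonempty κ]
    (U : κ → Matrix (Fin d) (Fin d) ℂ) (hU : IsUnitaryEnsemble U)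
    (E : Matrix (Fin d) (Fin d) ℂ →ₗ[ℂ] Matrix (Fin d) (Fin d) ℂ)
    (hE : IsQuantumChannel (⇑E))
    (Minv MinvAdj : Matrix (Fin d) (Fin d) ℂ → Matrix (Fin d) (Fin d) ℂ)
    (hMinvL : Function.LeftInverse Minv (shadowChannel U (⇑E)))
    (hMinvR : Function.RightInverse Minv (shadowChannel U (⇑E)))
    (hAdj : IsHSAdjoint Minv MinvAdj)
    (hfaithful : ∀ b : Fin d, ∃ σ : Matrix (Fin d) (Fin d) ℂ,
      IsDensityMatrix σ ∧ (E σ) b b ≠ 0) :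
    ∀ T : Matrix (Fin d) (Fin d) ℂ, T.IsHermitian →
      shadowNorm U (⇑E) MinvAdj T = 0 → T = 0 :=
  stmt_18_general U hU E hE Minv MinvAdj hMinvL hMinvR hAdj hfaithful

end NoisyShadows
end
end
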